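/- arXiv:1902.02333 — 2 statements merged into one kernel-verified Lean document; each statement's English description precedes it below -/
import Mathlib

section
/- The Thue–Morse word t, defined as the fixed point of the morphism 0 ↦ 01, 1 ↦ 10 starting from 0, contains no nonempty cube: there is no nonempty finite word u such that uuu is a factor of t. -/
open Fin.NatCast in
/-- The Thue–Morse sequence: `tm n` is the parity of the number of 1s in the
binary expansion of `n`. -/
def tmWord (n : ℕ) : Fin 2 := ((Nat.digits 2 n).count 1 : ℕ)

lemma tm_two_mul (n : ℕ) : tmWord (2 * n) = tmWord n := by
  rcases Nat.eq_zero_or_pos n with h | h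
  · subst h; rfl
  · unfold tmWord
    rw [Nat.digits_def' (by norm_num : (1:ℕ) < 2) (by omega : 0 < 2 * n)]
    simp [Nat.mul_div_cancel_left, Nat.mul_mod_right, List.count_cons]

lemma tm_two_mul_add_one (n : ℕ) : tmWord (2 * n + 1) = tmWord n + 1 := by
  unfold tmWord
  rw [Nat.digits_def' (by norm_num : (1:ℕ) < 2) (by omega : 0 < 2 * n + 1)]
  have h1 : (2 * n + 1) % 2 = 1 := by omega
  have h2 : (2 * n + 1) / 2 = n := by omega
  rw [h1, h2]
  simp [List.count_cons]
  rw [Fin.ext_iff]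
  simp only [Fin.val_add, Fin.val_natCast, Fin.val_one]
  omega

lemma fin_swap : ∀ x y : Fin 2, x = y + 1 → y = x + 1 := by decide

lemma fin_ne : ∀ x : Fin 2, x ≠ x + 1 := by decide

lemma no_const3 (n : ℕ) :
    ¬ (tmWord n = tmWord (n + 1) ∧ tmWord (n + 1) = tmWord (n + 2)) := by
  rintro ⟨h1, h2⟩
  rcases Nat.even_or_odd n with ⟨m, hm⟩ | ⟨m, hm⟩
  · have e1 : n = 2 * m := by omega
    have e2 : n + 1 = 2 * m + 1 := by omega
    rw [e2, e1, tm_two_mul, tm_two_mul_add_one] at h1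
    exact fin_ne _ h1
  · have e1 : n + 1 = 2 * (m + 1) := by omega
    have e2 : n + 2 = 2 * (m + 1) + 1 := by omega
    rw [e2, e1, tm_two_mul, tm_two_mul_add_one] at h2
    exact fin_ne _ h2

lemma main_no_period : ∀ p, 1 ≤ p → ∀ s,
    ¬ (∀ i < 2 * p, tmWord (s + i) = tmWord (s + i + p)) := by
  intro p
  induction p using Nat.strong_induction_on with
  | _ p IH =>
    intro hp s hper
    rcases Nat.even_or_odd p with ⟨q, hq⟩ | ⟨k, hk⟩
    · -- p even, p = 2q
      have hq1 : 1 ≤ q := by omega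
      have hq2 : q < p := by omega
      apply IH q hq2 hq1 ((s + 1) / 2)
      intro j hj
      set m := (s + 1) / 2 + j with hm
      have h1 : s ≤ 2 * m := by omega
      have h2 : 2 * m - s < 2 * p := by omega
      have h := hper (2 * m - s) h2
      have e1 : s + (2 * m - s) = 2 * m := by omega
      have e2 : s + (2 * m - s) + p = 2 * (m + q) := by omega
      rw [e2, e1, tm_two_mul, tm_two_mul] at h
      simpa using h
    · -- p odd, p = 2k+1
      rcases Nat.eq_zero_or_pos k with hk0 | hk1
      · -- p = 1
        have h0 := hper 0 (by omega)
        have h1 := hper 1 (by omega)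
        apply no_const3 s
        constructor
        · simpa [hk, hk0] using h0
        · have e1 : s + 1 + p = s + 2 := by omega
          rw [e1] at h1
          simpa using h1
      · -- p = 2k+1, k ≥ 1
        have claim3 : ∀ m, s ≤ 2 * m → 2 * m + 1 < s + 2 * p →
            tmWord (m + k) = tmWord (m + k + 1) := by
          intro m hm1 hm2
          have ha := hper (2 * m - s) (by omega)
          have e1 : s + (2 * m - s) = 2 * m := by omega
          have e2 : s + (2 * m - s) + p = 2 * (m + k) + 1 := by omega
          rw [e2, e1, tm_two_mul, tm_two_mul_add_one] at ha
          have ha' : tmWord (m + k) = tmWord m + 1 := fin_swap _ _ ha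
          have hb := hper (2 * m + 1 - s) (by omega)
          have f1 : s + (2 * m + 1 - s) = 2 * m + 1 := by omega
          have f2 : s + (2 * m + 1 - s) + p = 2 * (m + k + 1) := by omega
          rw [f2, f1, tm_two_mul_add_one, tm_two_mul] at hb
          rw [ha', ← hb]
        set m0 := (s + 1) / 2 with hm0
        have c1 := claim3 m0 (by omega) (by omega)
        have c2 := claim3 (m0 + 1) (by omega) (by omega)
        apply no_const3 (m0 + k)
        constructor
        · exact c1
        · have : m0 + 1 + k = m0 + k + 1 := by omega
          rw [this] at c2
          have e : m0 + k + 1 + 1 = m0 + k + 2 := by omega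
          rw [e] at c2
          exact c2

lemma cube_period {α : Type*} (u : List α) (i : ℕ) (h1 : i < 3 * u.length)
    (h2 : i + u.length < 3 * u.length) (hi : i < 2 * u.length) :
    (u ++ u ++ u)[i]'(by simp; omega) = (u ++ u ++ u)[i + u.length]'(by simp; omega) := by
  rcases lt_or_ge i u.length with h | h
  · rw [List.getElem_append_left (by simpa using by omega : i < (u ++ u).length),
        List.getElem_append_left h,
        List.getElem_append_left (by simp; omega : i + u.length < (u ++ u).length),
        List.getElem_append_right (by omega : u.length ≤ i + u.length)]
    congr 1
    omega
  · rw [List.getElem_append_left (by simp; omega : i < (u ++ u).length),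
        List.getElem_append_right (by omega : u.length ≤ i),
        List.getElem_append_right (by simp; omega : (u ++ u).length ≤ i + u.length)]
    congr 1
    simp
    omega

theorem stmt_3 :
    ¬ ∃ (u : List (Fin 2)) (s : ℕ), u ≠ [] ∧
      (List.range (3 * u.length)).map (fun n => tmWord (s + n)) = u ++ u ++ u := by
  rintro ⟨u, s, hu, h⟩
  have hL1 : 1 ≤ u.length := List.length_pos_iff.mpr hu
  apply main_no_period u.length hL1 s
  intro i hi
  have h1 : i < 3 * u.length := by omega
  have h2 : i + u.length < 3 * u.length := by omega
  have q1 := congrArg (fun l => l[i]?) h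
  have q2 := congrArg (fun l => l[i + u.length]?) h
  simp only [List.getElem?_map, List.getElem?_range h1, List.getElem?_range h2,
    Option.map_some] at q1 q2
  have e3 : (u ++ u ++ u)[i]? = (u ++ u ++ u)[i + u.length]? := by
    rw [List.getElem?_eq_getElem (show i < (u ++ u ++ u).length by simp; omega),
        List.getElem?_eq_getElem (show i + u.length < (u ++ u ++ u).length by simp; omega)]
    exact congrArg some (cube_period u i h1 h2 hi)
  have : some (tmWord (s + i)) = some (tmWord (s + (i + u.length))) := by
    rw [q1, q2, e3]
  rw [show s + (i + u.length) = s + i + u.length by omega] at this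
  exact Option.some.inj this
end

section
/- The ternary Thue word h, defined as the fixed point of the morphism 0 ↦ 012, 1 ↦ 02, 2 ↦ 1 starting from 0, is square-free: there is no nonempty finite word u such that uu is a factor of h. -/
/-- The morphism 0 ↦ 012, 1 ↦ 02, 2 ↦ 1 generating the ternary Thue word. -/
def phiH (l : List ℕ) : List ℕ :=
  l.flatMap (fun a => if a = 0 then [0, 1, 2] else if a = 1 then [0, 2] else [1])

def blk (a : ℕ) : List ℕ := if a = 0 then [0, 1, 2] else if a = 1 then [0, 2] else [1]

lemma phiH_nil : phiH [] = [] := rfl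

lemma phiH_cons (a : ℕ) (t : List ℕ) : phiH (a :: t) = blk a ++ phiH t := rfl

lemma phiH_append (l₁ l₂ : List ℕ) : phiH (l₁ ++ l₂) = phiH l₁ ++ phiH l₂ := by
  simp [phiH]

lemma phiH_concat (l : List ℕ) (a : ℕ) : phiH (l ++ [a]) = phiH l ++ blk a := by
  rw [phiH_append, phiH_cons, phiH_nil, List.append_nil]

lemma blk0 : blk 0 = [0, 1, 2] := rfl
lemma blk1 : blk 1 = [0, 2] := rfl
lemma blkE {a : ℕ} (h0 : a ≠ 0) (h1 : a ≠ 1) : blk a = [1] := by simp [blk, h0, h1]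

lemma snoc_inj {l₁ l₂ : List ℕ} {a b : ℕ} (h : l₁ ++ [a] = l₂ ++ [b]) : l₁ = l₂ ∧ a = b := by
  have := List.append_inj' h rfl; simpa using this

lemma snoc_cases (l : List ℕ) : l = [] ∨ ∃ L b, l = L ++ [b] := by
  induction l with
  | nil => exact Or.inl rfl
  | cons a t ih =>
    right
    rcases ih with rfl | ⟨L, b, rfl⟩
    · exact ⟨[], a, rfl⟩
    · exact ⟨a :: L, b, rfl⟩

def Sqf (w : List ℕ) : Prop := ∀ u : List ℕ, u ≠ [] → ¬ (u ++ u) <:+: w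

lemma sqf_infix {w z : List ℕ} (h : z <:+: w) (hS : Sqf w) : Sqf z :=
  fun u hu hi => hS u hu (hi.trans h)

lemma mem_phiH {i : ℕ} {w : List ℕ} (h : i ∈ phiH w) : i < 3 := by
  rcases List.mem_flatMap.1 h with ⟨a, _, hi⟩
  by_cases h0 : a = 0
  · simp [h0] at hi; omega
  · by_cases h1 : a = 1
    · simp [h0, h1] at hi; omega
    · simp [h0, h1] at hi; omega

lemma phiH_head_ne_two (t r : List ℕ) : phiH t ≠ 2 :: r := by
  cases t with
  | nil => simp [phiH]
  | cons b t' =>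
    rw [phiH_cons]
    by_cases hb0 : b = 0
    · simp [blk, hb0]
    · by_cases hb1 : b = 1
      · simp [blk, hb0, hb1]
      · simp [blk, hb0, hb1]

/-- every 0 in a φ-image starts a block -/
lemma M1 : ∀ (w l r : List ℕ), phiH w = l ++ 0 :: r →
    ∃ α β, w = α ++ β ∧ phiH α = l ∧ phiH β = 0 :: r := by
  intro w
  induction w with
  | nil => intro l r h; exact absurd h (by simp [phiH])
  | cons a t ih =>
    intro l r h
    rw [phiH_cons] at h
    by_cases ha0 : a = 0
    · subst ha0
      rw [blk0] at h
      rcases l with _ | ⟨x, _ | ⟨x₂, _ | ⟨x₃, l₃⟩⟩⟩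
      · refine ⟨[], 0 :: t, rfl, rfl, ?_⟩
        rw [phiH_cons, blk0]
        simpa using h
      · simp only [List.cons_append, List.nil_append] at h
        injection h with h1 h; injection h with h2 h
        omega
      · simp only [List.cons_append, List.nil_append] at h
        injection h with h1 h; injection h with h2 h; injection h with h3 h
        omega
      · simp only [List.cons_append, List.nil_append] at h
        injection h with h1 h; injection h with h2 h; injection h with h3 h
        subst h1; subst h2; subst h3
        obtain ⟨α, β, hts, hα, hβ⟩ := ih l₃ r h
        exact ⟨0 :: α, β, by simp [hts], by rw [phiH_cons, hα, blk0]; rfl, hβ⟩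
    · by_cases ha1 : a = 1
      · subst ha1
        rw [blk1] at h
        rcases l with _ | ⟨x, _ | ⟨x₂, l₂⟩⟩
        · refine ⟨[], 1 :: t, rfl, rfl, ?_⟩
          rw [phiH_cons, blk1]
          simpa using h
        · simp only [List.cons_append, List.nil_append] at h
          injection h with h1 h; injection h with h2 h
          omega
        · simp only [List.cons_append, List.nil_append] at h
          injection h with h1 h; injection h with h2 h
          subst h1; subst h2
          obtain ⟨α, β, hts, hα, hβ⟩ := ih l₂ r h
          exact ⟨1 :: α, β, by simp [hts], by rw [phiH_cons, hα, blk1]; rfl, hβ⟩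
      · rw [blkE ha0 ha1] at h
        rcases l with _ | ⟨x, l₁⟩
        · simp at h
        · simp only [List.cons_append, List.nil_append] at h
          injection h with h1 h
          subst h1
          obtain ⟨α, β, hts, hα, hβ⟩ := ih l₁ r h
          exact ⟨a :: α, β, by simp [hts], by rw [phiH_cons, hα, blkE ha0 ha1]; rfl, hβ⟩

/-- every 2 in a φ-image ends a block -/
lemma M1r : ∀ (w l r : List ℕ), phiH w = l ++ 2 :: r →
    ∃ α β, w = α ++ β ∧ phiH α = l ++ [2] ∧ phiH β = r := by
  intro w
  induction w with
  | nil => intro l r h; exact absurd h (by simp [phiH])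
  | cons a t ih =>
    intro l r h
    rw [phiH_cons] at h
    by_cases ha0 : a = 0
    · subst ha0
      rw [blk0] at h
      rcases l with _ | ⟨x, _ | ⟨x₂, _ | ⟨x₃, l₃⟩⟩⟩
      · simp only [List.nil_append] at h
        injection h with h1 h
        omega
      · simp only [List.cons_append, List.nil_append] at h
        injection h with h1 h; injection h with h2 h
        omega
      · simp only [List.cons_append, List.nil_append] at h
        injection h with h1 h; injection h with h2 h; injection h with h3 h
        subst h1; subst h2
        exact ⟨[0], t, rfl, by rw [phiH_cons, phiH_nil, blk0]; simp, h⟩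
      · simp only [List.cons_append, List.nil_append] at h
        injection h with h1 h; injection h with h2 h; injection h with h3 h
        subst h1; subst h2; subst h3
        obtain ⟨α, β, hts, hα, hβ⟩ := ih l₃ r h
        exact ⟨0 :: α, β, by simp [hts], by rw [phiH_cons, hα, blk0]; rfl, hβ⟩
    · by_cases ha1 : a = 1
      · subst ha1
        rw [blk1] at h
        rcases l with _ | ⟨x, _ | ⟨x₂, l₂⟩⟩
        · simp only [List.nil_append] at h
          injection h with h1 h
          omega
        · simp only [List.cons_append, List.nil_append] at h
          injection h with h1 h; injection h with h2 h
          subst h1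
          exact ⟨[1], t, rfl, by rw [phiH_cons, phiH_nil, blk1]; simp, h⟩
        · simp only [List.cons_append, List.nil_append] at h
          injection h with h1 h; injection h with h2 h
          subst h1; subst h2
          obtain ⟨α, β, hts, hα, hβ⟩ := ih l₂ r h
          exact ⟨1 :: α, β, by simp [hts], by rw [phiH_cons, hα, blk1]; rfl, hβ⟩
      · rw [blkE ha0 ha1] at h
        rcases l with _ | ⟨x, l₁⟩
        · simp only [List.nil_append] at h
          injection h with h1 h
          omega
        · simp only [List.cons_append, List.nil_append] at h
          injection h with h1 h
          subst h1
          obtain ⟨α, β, hts, hα, hβ⟩ := ih l₁ r h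
          exact ⟨a :: α, β, by simp [hts],
            by rw [phiH_cons, hα, blkE ha0 ha1]; simp, hβ⟩

/-- synchronization: images form a prefix code -/
lemma M2 : ∀ (c β r : List ℕ), (∀ i ∈ c, i < 3) → (∀ i ∈ β, i < 3) →
    phiH β = phiH c ++ r → ∃ β', β = c ++ β' ∧ phiH β' = r := by
  intro c
  induction c with
  | nil => exact fun β r _ _ h => ⟨β, by simp, by simpa [phiH] using h⟩
  | cons a c' ih =>
    intro β r hc hβ h
    have ha : a < 3 := hc a (by simp)
    cases β with
    | nil =>
      exfalso
      rw [phiH_cons, phiH_nil] at h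
      interval_cases a <;> simp [blk] at h
    | cons b β₁ =>
      have hb : b < 3 := hβ b (by simp)
      rw [phiH_cons, phiH_cons, List.append_assoc] at h
      have hab : a = b := by
        interval_cases a <;> interval_cases b <;> simp [blk] at h ⊢
      subst hab
      replace h := List.append_cancel_left h
      obtain ⟨β', hβ', hr⟩ := ih β₁ r (fun i hi => hc i (by simp [hi]))
        (fun i hi => hβ i (by simp [hi])) h
      exact ⟨β', by simp [hβ'], hr⟩

lemma no22 : ∀ (w l r : List ℕ), l ++ [2, 2] ++ r ≠ phiH w := by
  intro w
  induction w with
  | nil => intro l r h; simp [phiH] at h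
  | cons a t ih =>
    intro l r h
    rw [phiH_cons] at h
    replace h := h.symm
    by_cases ha0 : a = 0
    · subst ha0
      rw [blk0] at h
      rcases l with _ | ⟨x, _ | ⟨x₂, _ | ⟨x₃, l₃⟩⟩⟩
      · simp only [List.nil_append] at h
        injection h with h1 h
        omega
      · simp only [List.cons_append, List.nil_append] at h
        injection h with h1 h; injection h with h2 h
        omega
      · simp only [List.cons_append, List.nil_append] at h
        injection h with h1 h; injection h with h2 h; injection h with h3 h
        exact phiH_head_ne_two t r h
      · simp only [List.cons_append, List.nil_append] at h
        injection h with h1 h; injection h with h2 h; injection h with h3 h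
        exact ih l₃ r h.symm
    · by_cases ha1 : a = 1
      · subst ha1
        rw [blk1] at h
        rcases l with _ | ⟨x, _ | ⟨x₂, l₂⟩⟩
        · simp only [List.nil_append] at h
          injection h with h1 h
          omega
        · simp only [List.cons_append, List.nil_append] at h
          injection h with h1 h; injection h with h2 h
          exact phiH_head_ne_two t r h
        · simp only [List.cons_append, List.nil_append] at h
          injection h with h1 h; injection h with h2 h
          exact ih l₂ r h.symm
      · rw [blkE ha0 ha1] at h
        rcases l with _ | ⟨x, l₁⟩
        · simp only [List.nil_append] at h
          injection h with h1 h
          omega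
        · simp only [List.cons_append, List.nil_append] at h
          injection h with h1 h
          exact ih l₁ r h.symm

lemma sqf_tail {a : ℕ} {t : List ℕ} (h : Sqf (a :: t)) : Sqf t :=
  sqf_infix ⟨[a], [], by simp⟩ h

lemma no11 : ∀ (w : List ℕ), (∀ i ∈ w, i < 3) → Sqf w →
    ∀ l r, l ++ [1, 1] ++ r ≠ phiH w := by
  intro w
  induction w with
  | nil => intro _ _ l r h; simp [phiH] at h
  | cons a t ih =>
    intro hA hS l r h
    rw [phiH_cons] at h
    replace h := h.symm
    by_cases ha0 : a = 0
    · subst ha0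
      rw [blk0] at h
      rcases l with _ | ⟨x, _ | ⟨x₂, _ | ⟨x₃, l₃⟩⟩⟩
      · simp only [List.nil_append] at h
        injection h with h1 h
        omega
      · simp only [List.cons_append, List.nil_append] at h
        injection h with h1 h; injection h with h2 h; injection h with h3 h
        omega
      · simp only [List.cons_append, List.nil_append] at h
        injection h with h1 h; injection h with h2 h; injection h with h3 h
        omega
      · simp only [List.cons_append, List.nil_append] at h
        injection h with h1 h; injection h with h2 h; injection h with h3 h
        exact ih (fun i hi => hA i (by simp [hi])) (sqf_tail hS) l₃ r h.symm
    · by_cases ha1 : a = 1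
      · subst ha1
        rw [blk1] at h
        rcases l with _ | ⟨x, _ | ⟨x₂, l₂⟩⟩
        · simp only [List.nil_append] at h
          injection h with h1 h
          omega
        · simp only [List.cons_append, List.nil_append] at h
          injection h with h1 h; injection h with h2 h
          omega
        · simp only [List.cons_append, List.nil_append] at h
          injection h with h1 h; injection h with h2 h
          exact ih (fun i hi => hA i (by simp [hi])) (sqf_tail hS) l₂ r h.symm
      · have ha2 : a = 2 := by have := hA a (by simp); omega
        rw [blkE ha0 ha1] at h
        rcases l with _ | ⟨x, l₁⟩
        · simp only [List.nil_append] at h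
          injection h with h1 h
          -- h : phiH t = 1 :: r
          cases t with
          | nil => simp [phiH] at h
          | cons b t' =>
            rw [phiH_cons] at h
            by_cases hb0 : b = 0
            · rw [hb0, blk0] at h
              injection h with hb h
              omega
            · by_cases hb1 : b = 1
              · rw [hb1, blk1] at h
                injection h with hb h
                omega
              · have hb2 : b = 2 := by have := hA b (by simp); omega
                subst ha2; subst hb2
                exact hS [2] (by simp) ⟨[], t', by simp⟩
        · simp only [List.cons_append, List.nil_append] at h
          injection h with h1 h
          exact ih (fun i hi => hA i (by simp [hi])) (sqf_tail hS) l₁ r h.symm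

lemma no010 : ∀ (w l r : List ℕ), l ++ [0, 1, 0] ++ r ≠ phiH w := by
  intro w l r h
  have h' : phiH w = l ++ 0 :: (1 :: 0 :: r) := by rw [← h]; simp
  obtain ⟨α, β, _, _, hβ⟩ := M1 w l _ h'
  cases β with
  | nil => simp [phiH] at hβ
  | cons b β' =>
    rw [phiH_cons] at hβ
    by_cases hb0 : b = 0
    · simp [blk, hb0] at hβ
    · by_cases hb1 : b = 1
      · simp [blk, hb0, hb1] at hβ
      · simp [blk, hb0, hb1] at hβ

lemma no212 : ∀ (w l r : List ℕ), l ++ [2, 1, 2] ++ r ≠ phiH w := by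
  intro w l r h
  have h' : phiH w = l ++ 2 :: (1 :: 2 :: r) := by rw [← h]; simp
  obtain ⟨α, β, _, _, hβ⟩ := M1r w l _ h'
  cases β with
  | nil => simp [phiH] at hβ
  | cons b β' =>
    rw [phiH_cons] at hβ
    by_cases hb0 : b = 0
    · simp [blk, hb0] at hβ
    · by_cases hb1 : b = 1
      · simp [blk, hb0, hb1] at hβ
      · simp only [blk, if_neg hb0, if_neg hb1, List.cons_append, List.nil_append,
          List.cons.injEq] at hβ
        exact phiH_head_ne_two β' r hβ.2

lemma parse01 {β' : List ℕ} {R : List ℕ} (h : phiH β' = 0 :: 1 :: R) :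
    ∃ β'', β' = 0 :: β'' := by
  cases β' with
  | nil => simp [phiH] at h
  | cons b t =>
    rw [phiH_cons] at h
    by_cases hb0 : b = 0
    · exact ⟨t, by rw [hb0]⟩
    · by_cases hb1 : b = 1
      · simp [blk, hb0, hb1] at h
      · simp [blk, hb0, hb1] at h

lemma parse0 {β' : List ℕ} {R : List ℕ} (h : phiH β' = 0 :: R) :
    ∃ b β'', β' = b :: β'' ∧ (b = 0 ∨ b = 1) := by
  cases β' with
  | nil => simp [phiH] at h
  | cons b t =>
    by_cases hb0 : b = 0
    · exact ⟨b, t, rfl, Or.inl hb0⟩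
    · by_cases hb1 : b = 1
      · exact ⟨b, t, rfl, Or.inr hb1⟩
      · rw [phiH_cons] at h; simp [blk, hb0, hb1] at h

lemma first_zero : ∀ (u : List ℕ), 0 ∈ u → ∃ x y, u = x ++ 0 :: y ∧ 0 ∉ x := by
  intro u
  induction u with
  | nil => simp
  | cons a t ih =>
    intro h
    by_cases ha : a = 0
    · exact ⟨[], t, by simp [ha], by simp⟩
    · have h' : 0 ∈ t := by
        rcases List.mem_cons.1 h with h | h
        · exact absurd h.symm ha
        · exact h
      obtain ⟨x, y, hx, hy⟩ := ih h'
      exact ⟨a :: x, y, by simp [hx], by simp [hy]; omega⟩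

/-- The core synchronization lemma: a square in φ(w) containing a 0 forces a
forbidden configuration in w. -/
lemma key (w α v β p x y s : List ℕ)
    (hA : ∀ i ∈ w, i < 3) (hS : Sqf w)
    (h010 : ∀ l r, l ++ [0, 1, 0] ++ r ≠ w) (h212 : ∀ l r, l ++ [2, 1, 2] ++ r ≠ w)
    (hw : w = α ++ v ++ β) (hx0 : 0 ∉ x)
    (hα : phiH α = p ++ x) (hv : phiH v = (0 :: y) ++ x)
    (hβ : phiH β = (0 :: y) ++ s) : False := by
  subst hw
  have hAα : ∀ i ∈ α, i < 3 := fun i hi => hA i (by simp [hi])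
  have hAv : ∀ i ∈ v, i < 3 := fun i hi => hA i (by simp [hi])
  have hAβ : ∀ i ∈ β, i < 3 := fun i hi => hA i (by simp [hi])
  rcases snoc_cases x with rfl | ⟨x', e, rfl⟩
  · -- x = [] : directly get square vv
    simp only [List.append_nil] at hv hα
    have hM : phiH β = phiH v ++ s := by rw [hβ, ← hv]
    obtain ⟨β', hβ', -⟩ := M2 v β s hAv hAβ hM
    have hvne : v ≠ [] := by
      intro hc; rw [hc] at hv; simp [phiH] at hv
    exact hS v hvne ⟨α, β', by rw [hβ']; simp⟩
  · -- x = x' ++ [e]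
    have hvne : v ≠ [] := by
      intro hc; rw [hc] at hv; simp [phiH] at hv
    have hαne : α ≠ [] := by
      intro hc
      rw [hc] at hα
      have := congrArg List.length hα
      simp [phiH] at this
    rcases snoc_cases v with rfl | ⟨v₁, a, rfl⟩
    · exact hvne rfl
    rcases snoc_cases α with rfl | ⟨α₁, a', rfl⟩
    · exact hαne rfl
    clear hvne hαne
    rw [phiH_concat] at hv hα
    have ha : a < 3 := hAv a (by simp)
    have ha' : a' < 3 := hAα a' (by simp)
    interval_cases a
    · -- a = 0, block [0,1,2], e = 2
      have h1 := snoc_inj (l₁ := phiH v₁ ++ [0, 1]) (l₂ := (0 :: y) ++ x') (a := 2) (b := e)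
        (by simpa [blk] using hv)
      obtain ⟨h1, he⟩ := h1
      subst he
      rcases snoc_cases x' with rfl | ⟨x'', e₂, rfl⟩
      · -- x = [2] with v ending in 0: h1 : phiH v₁ ++ [0,1] = 0 :: y
        simp only [List.append_nil] at h1
        have hM : phiH β = phiH v₁ ++ ([0, 1] ++ s) := by
          rw [hβ, ← h1, List.append_assoc]
        obtain ⟨β', hβ', hr⟩ := M2 v₁ β _ (fun i hi => hAv i (by simp [hi])) hAβ hM
        obtain ⟨β'', rfl⟩ := parse01 (by simpa using hr)
        -- square (v₁ ++ [0])
        exact hS (v₁ ++ [0]) (by simp) ⟨α₁ ++ [a'], β'', by rw [hβ']; simp⟩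
      · -- x' = x'' ++ [e₂]
        have h2 := snoc_inj (l₁ := phiH v₁ ++ [0]) (l₂ := (0 :: y) ++ x'') (a := 1) (b := e₂)
          (by simpa [blk] using h1)
        obtain ⟨h2, he₂⟩ := h2
        subst he₂
        rcases snoc_cases x'' with rfl | ⟨x''', e₃, rfl⟩
        · -- x = [1,2], v ends in 0, h2 : phiH v₁ ++ [0] = 0 :: y
          simp only [List.append_nil] at h2
          have hM : phiH β = phiH v₁ ++ (0 :: s) := by
            rw [hβ, ← h2]; simp
          obtain ⟨β', hβ', hr⟩ := M2 v₁ β _ (fun i hi => hAv i (by simp [hi])) hAβ hM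
          obtain ⟨b, β'', rfl, hb⟩ := parse0 hr
          rcases hb with rfl | rfl
          · -- b = 0 : square (v₁ ++ [0])
            exact hS (v₁ ++ [0]) (by simp) ⟨α₁ ++ [a'], β'', by rw [hβ']; simp⟩
          · -- b = 1 : need α to end with 0, square (0 :: v₁)
            interval_cases a'
            · -- a' = 0
              exact hS (0 :: v₁) (by simp) ⟨α₁, 1 :: β'', by rw [hβ']; simp⟩
            · -- a' = 1 : phiH α₁ ++ [0,2] = p ++ [1,2], contradiction
              exfalso
              have h9 := snoc_inj (l₁ := phiH α₁ ++ [0]) (l₂ := p ++ [1]) (a := 2) (b := 2)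
                (by simpa [blk] using hα)
              exact absurd (snoc_inj h9.1).2 (by norm_num)
            · -- a' = 2 : phiH α₁ ++ [1] = p ++ [1,2]
              exfalso
              exact absurd (snoc_inj (l₁ := phiH α₁) (l₂ := p ++ [1]) (a := 1) (b := 2)
                (by simpa [blk] using hα)).2 (by norm_num)
        · -- deeper: e₃ = 0 contradiction with 0 ∉ x
          exfalso
          have h3 := snoc_inj (l₁ := phiH v₁) (l₂ := (0 :: y) ++ x''') (a := 0) (b := e₃)
            (by simpa [blk] using h2)
          rw [← h3.2] at hx0
          simp at hx0
    · -- a = 1, block [0,2], e = 2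
      have h1 := snoc_inj (l₁ := phiH v₁ ++ [0]) (l₂ := (0 :: y) ++ x') (a := 2) (b := e)
        (by simpa [blk] using hv)
      obtain ⟨h1, he⟩ := h1
      subst he
      rcases snoc_cases x' with rfl | ⟨x'', e₂, rfl⟩
      · -- x = [2], v ends in 1, h1 : phiH v₁ ++ [0] = 0 :: y
        simp only [List.append_nil] at h1
        have hM : phiH β = phiH v₁ ++ (0 :: s) := by
          rw [hβ, ← h1]; simp
        obtain ⟨β', hβ', hr⟩ := M2 v₁ β _ (fun i hi => hAv i (by simp [hi])) hAβ hM
        obtain ⟨b, β'', rfl, hb⟩ := parse0 hr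
        rcases hb with rfl | rfl
        · -- b = 0 : analyze α's last letter a'
          interval_cases a'
          · -- a' = 0 : configuration α₁ 0 | v₁ 1 | v₁ 0
            rcases v₁ with _ | ⟨c, t⟩
            · -- v₁ = [] : factor 010
              exact h010 α₁ β'' (by rw [hβ']; simp)
            · -- v₁ = c :: t with blk c starting with 0
              have hc01 : c = 0 ∨ c = 1 := by
                rw [phiH_cons] at h1
                by_cases hc0 : c = 0
                · exact Or.inl hc0
                · by_cases hc1 : c = 1
                  · exact Or.inr hc1
                  · exfalso; simp [blk, hc0, hc1] at h1
              rcases hc01 with rfl | rfl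
              · -- c = 0 : square [0] at junction α v
                exact hS [0] (by simp) ⟨α₁, t ++ [1] ++ (0 :: t ++ 0 :: β''),
                  by rw [hβ']; simp⟩
              · -- c = 1 : square [1] inside v₁ 1 v₁
                exact hS [1] (by simp) ⟨(α₁ ++ [0]) ++ 1 :: t, t ++ 0 :: β'',
                  by rw [hβ']; simp⟩
          · -- a' = 1 : square (1 :: v₁)
            exact hS (1 :: v₁) (by simp) ⟨α₁, 0 :: β'', by rw [hβ']; simp⟩
          · -- a' = 2 : phiH α₁ ++ [1] = p ++ [2] impossible
            exfalso
            exact absurd (snoc_inj (l₁ := phiH α₁) (l₂ := p) (a := 1) (b := 2)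
              (by simpa [blk] using hα)).2 (by norm_num)
        · -- b = 1 : square (v₁ ++ [1])
          exact hS (v₁ ++ [1]) (by simp) ⟨α₁ ++ [a'], β'', by rw [hβ']; simp⟩
      · -- deeper: e₂ = 0 contradiction
        exfalso
        have h2 := snoc_inj (l₁ := phiH v₁) (l₂ := (0 :: y) ++ x'') (a := 0) (b := e₂)
          (by simpa [blk] using h1)
        rw [← h2.2] at hx0
        simp at hx0
    · -- a = 2, block [1], e = 1
      have h1 := snoc_inj (l₁ := phiH v₁) (l₂ := (0 :: y) ++ x') (a := 1) (b := e)
        (by simpa [blk] using hv)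
      obtain ⟨h1, he⟩ := h1
      subst he
      -- α must end with 2
      have ha2 : a' = 2 ∧ phiH α₁ = p ++ x' := by
        interval_cases a'
        · exact absurd (snoc_inj (l₁ := phiH α₁ ++ [0, 1]) (l₂ := p ++ x') (a := 2) (b := 1)
            (by simpa [blk] using hα)).2 (by norm_num)
        · exact absurd (snoc_inj (l₁ := phiH α₁ ++ [0]) (l₂ := p ++ x') (a := 2) (b := 1)
            (by simpa [blk] using hα)).2 (by norm_num)
        · have := snoc_inj (l₁ := phiH α₁) (l₂ := p ++ x') (a := 1) (b := 1)
            (by simpa [blk] using hα)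
          exact ⟨rfl, this.1⟩
      obtain ⟨rfl, hα₁⟩ := ha2
      rcases snoc_cases x' with rfl | ⟨x'', e₂, rfl⟩
      · -- x = [1] : h1 : phiH v₁ = 0 :: y, square (2 :: v₁)
        simp only [List.append_nil] at h1
        have hM : phiH β = phiH v₁ ++ s := by rw [hβ, ← h1]
        obtain ⟨β', hβ', -⟩ := M2 v₁ β s (fun i hi => hAv i (by simp [hi])) hAβ hM
        exact hS (2 :: v₁) (by simp) ⟨α₁, β', by rw [hβ']; simp⟩
      · -- x' = x'' ++ [e₂] : v₁ nonempty
        have hv₁ne : v₁ ≠ [] := by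
          intro hc
          rw [hc] at h1
          have := congrArg List.length h1
          simp [phiH] at this
        rcases snoc_cases v₁ with rfl | ⟨v₂, g, rfl⟩
        · exact hv₁ne rfl
        clear hv₁ne
        rw [phiH_concat] at h1
        have hg : g < 3 := hAv g (by simp)
        interval_cases g
        · -- g = 0, block [0,1,2], e₂ = 2
          have h2 := snoc_inj (l₁ := phiH v₂ ++ [0, 1]) (l₂ := (0 :: y) ++ x'') (a := 2) (b := e₂)
            (by simpa [blk] using h1)
          obtain ⟨h2, he₂⟩ := h2
          subst he₂
          rcases snoc_cases x'' with rfl | ⟨x''', e₃, rfl⟩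
          · -- x = [2,1] : h2 : phiH v₂ ++ [0,1] = 0 :: y
            simp only [List.append_nil] at h2
            have hM : phiH β = phiH v₂ ++ ([0, 1] ++ s) := by
              rw [hβ, ← h2, List.append_assoc]
            obtain ⟨β', hβ', hr⟩ := M2 v₂ β _ (fun i hi => hAv i (by simp [hi])) hAβ hM
            obtain ⟨β'', rfl⟩ := parse01 (by simpa using hr)
            -- square (2 :: v₂ ++ [0])
            exact hS (2 :: (v₂ ++ [0])) (by simp) ⟨α₁, β'', by rw [hβ']; simp⟩
          · -- deeper: e₃ = 1
            have h3 := snoc_inj (l₁ := phiH v₂ ++ [0]) (l₂ := (0 :: y) ++ x''') (a := 1) (b := e₃)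
              (by simpa [blk] using h2)
            obtain ⟨h3, he₃⟩ := h3
            subst he₃
            rcases snoc_cases x''' with rfl | ⟨x₄, e₄, rfl⟩
            · -- x = [1,2,1] : α₁ must end with 0
              simp only [List.append_nil] at h3
              have hα₁ne : α₁ ≠ [] := by
                intro hc
                rw [hc] at hα₁
                have := congrArg List.length hα₁
                simp [phiH] at this
              rcases snoc_cases α₁ with rfl | ⟨α₂, g', rfl⟩
              · exact hα₁ne rfl
              clear hα₁ne
              rw [phiH_concat] at hα₁
              have hg' : g' < 3 := hAα g' (by simp)
              have hM : phiH β = phiH v₂ ++ (0 :: s) := by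
                rw [hβ, ← h3]; simp
              obtain ⟨β', hβ', hr⟩ := M2 v₂ β _ (fun i hi => hAv i (by simp [hi])) hAβ hM
              obtain ⟨b, β'', rfl, hb⟩ := parse0 hr
              interval_cases g'
              · -- g' = 0 : square ([0,2] ++ v₂)
                exact hS ([0, 2] ++ v₂) (by simp) ⟨α₂, b :: β'', by rw [hβ']; simp⟩
              · -- g' = 1 : phiH α₂ ++ [0,2] = p ++ [1,2] impossible
                exfalso
                have h9 := snoc_inj (l₁ := phiH α₂ ++ [0]) (l₂ := p ++ [1]) (a := 2) (b := 2)
                  (by simpa [blk] using hα₁)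
                exact absurd (snoc_inj h9.1).2 (by norm_num)
              · -- g' = 2 : phiH α₂ ++ [1] = p ++ [1,2] impossible
                exfalso
                exact absurd (snoc_inj (l₁ := phiH α₂) (l₂ := p ++ [1]) (a := 1) (b := 2)
                  (by simpa [blk] using hα₁)).2 (by norm_num)
            · -- e₄ = 0 contradiction
              exfalso
              have h4 := snoc_inj (l₁ := phiH v₂) (l₂ := (0 :: y) ++ x₄) (a := 0) (b := e₄)
                (by simpa [blk] using h3)
              rw [← h4.2] at hx0
              simp at hx0
        · -- g = 1, block [0,2], e₂ = 2
          have h2 := snoc_inj (l₁ := phiH v₂ ++ [0]) (l₂ := (0 :: y) ++ x'') (a := 2) (b := e₂)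
            (by simpa [blk] using h1)
          obtain ⟨h2, he₂⟩ := h2
          subst he₂
          rcases snoc_cases x'' with rfl | ⟨x''', e₃, rfl⟩
          · -- x = [2,1] : h2 : phiH v₂ ++ [0] = 0 :: y
            simp only [List.append_nil] at h2
            have hM : phiH β = phiH v₂ ++ (0 :: s) := by
              rw [hβ, ← h2]; simp
            obtain ⟨β', hβ', hr⟩ := M2 v₂ β _ (fun i hi => hAv i (by simp [hi])) hAβ hM
            obtain ⟨b, β'', rfl, hb⟩ := parse0 hr
            rcases hb with rfl | rfl
            · -- b = 0
              rcases snoc_cases v₂ with rfl | ⟨v₃, d, rfl⟩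
              · -- v₂ = [] : factor 212
                exact h212 α₁ (0 :: β'') (by rw [hβ']; simp)
              · have hd : d < 3 := hAv d (by simp)
                interval_cases d
                · -- d = 0 : square [0] inside β
                  exact hS [0] (by simp)
                    ⟨(α₁ ++ [2]) ++ ((v₃ ++ [0]) ++ [1] ++ [2]) ++ v₃, β'',
                      by rw [hβ']; simp⟩
                · -- d = 1 : square [1] at v₂ | [1,2]
                  exact hS [1] (by simp)
                    ⟨(α₁ ++ [2]) ++ v₃, [2] ++ ((v₃ ++ [1]) ++ 0 :: β''),
                      by rw [hβ']; simp⟩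
                · -- d = 2 : factor 212
                  exact h212 ((α₁ ++ [2]) ++ v₃) (v₃ ++ [2] ++ 0 :: β'' )
                    (by rw [hβ']; simp)
            · -- b = 1 : square (2 :: v₂ ++ [1])
              exact hS (2 :: (v₂ ++ [1])) (by simp) ⟨α₁, β'', by rw [hβ']; simp⟩
          · -- e₃ = 0 contradiction
            exfalso
            have h3 := snoc_inj (l₁ := phiH v₂) (l₂ := (0 :: y) ++ x''') (a := 0) (b := e₃)
              (by simpa [blk] using h2)
            rw [← h3.2] at hx0
            simp at hx0
        · -- g = 2 : v contains [2,2]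
          exact hS [2] (by simp) ⟨α₁ ++ [2] ++ v₂, β, by simp⟩

lemma step (w : List ℕ) (hA : ∀ i ∈ w, i < 3) (hS : Sqf w)
    (h010 : ∀ l r, l ++ [0, 1, 0] ++ r ≠ w) (h212 : ∀ l r, l ++ [2, 1, 2] ++ r ≠ w) :
    Sqf (phiH w) := by
  intro u hu hinf
  by_cases h0 : (0 : ℕ) ∈ u
  · -- case B : u contains a 0
    obtain ⟨x, y, rfl, hx0⟩ := first_zero u h0
    obtain ⟨l, r, hlr⟩ := hinf
    have h1 : phiH w = (l ++ x) ++ 0 :: ((y ++ x) ++ 0 :: (y ++ r)) := by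
      rw [← hlr]; simp
    obtain ⟨α, β₀, hw1, hα, hβ₀⟩ := M1 w (l ++ x) _ h1
    have h2 : phiH β₀ = ((0 :: y) ++ x) ++ 0 :: (y ++ r) := by rw [hβ₀]; simp
    obtain ⟨v, β, hw2, hveq, hβeq⟩ := M1 β₀ ((0 :: y) ++ x) _ h2
    exact key w α v β l x y r hA hS h010 h212
      (by rw [hw1, hw2, List.append_assoc]) hx0 hα hveq (by rw [hβeq]; simp)
  · -- case A : u has no 0
    have hmem : ∀ i ∈ u, i = 1 ∨ i = 2 := by
      intro i hi
      have h3 : i < 3 := mem_phiH (hinf.subset (by simp [hi]))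
      have : i ≠ 0 := fun h => h0 (h ▸ hi)
      omega
    have hadj : ∀ (A : List ℕ) (e : ℕ) (B : List ℕ), u ++ u = A ++ e :: e :: B → False := by
      intro A e B hAB
      have hee : [e, e] <:+: phiH w := by
        refine List.IsInfix.trans ⟨A, B, ?_⟩ hinf
        rw [hAB]; simp
      have heu : e ∈ u := by
        have : e ∈ u ++ u := by rw [hAB]; simp
        simpa using this
      obtain ⟨l, r, hh⟩ := hee
      rcases hmem e heu with rfl | rfl
      · exact no11 w hA hS l r hh
      · exact no22 w l r hh
    have h212' : ∀ (A : List ℕ) (B : List ℕ), u ++ u = A ++ [2, 1, 2] ++ B → False := by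
      intro A B hAB
      obtain ⟨l, r, hh⟩ := List.IsInfix.trans (⟨A, B, hAB.symm⟩ : [2,1,2] <:+: u ++ u) hinf
      exact no212 w l r hh
    match u, hu with
    | [e], _ => exact hadj [] e [] (by simp)
    | [e₁, e₂], _ =>
      have h12 : e₁ ≠ e₂ := fun h => hadj [] e₁ [e₂, e₂] (by rw [h]; simp)
      rcases hmem e₁ (by simp) with rfl | rfl <;> rcases hmem e₂ (by simp) with rfl | rfl
      · exact h12 rfl
      · exact h212' [1] [] (by simp)
      · exact h212' [] [1] (by simp)
      · exact h12 rfl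
    | [e₁, e₂, e₃], _ =>
      have h12 : e₁ ≠ e₂ := fun h => hadj [] e₁ [e₃, e₁, e₂, e₃] (by rw [h]; simp)
      have h23 : e₂ ≠ e₃ := fun h => hadj [e₁] e₂ [e₁, e₂, e₃] (by rw [h]; simp)
      have h31 : e₃ ≠ e₁ := fun h => hadj [e₁, e₂] e₃ [e₂, e₃] (by rw [h]; simp)
      rcases hmem e₁ (by simp) with rfl | rfl <;>
        rcases hmem e₂ (by simp) with rfl | rfl <;>
        rcases hmem e₃ (by simp) with rfl | rfl <;> simp_all
    | e₁ :: e₂ :: e₃ :: e₄ :: t, _ =>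
      have h12 : e₁ ≠ e₂ := fun h =>
        hadj [] e₁ (e₃ :: e₄ :: t ++ (e₁ :: e₂ :: e₃ :: e₄ :: t)) (by rw [h]; simp)
      have h23 : e₂ ≠ e₃ := fun h =>
        hadj [e₁] e₂ (e₄ :: t ++ (e₁ :: e₂ :: e₃ :: e₄ :: t)) (by rw [h]; simp)
      have h34 : e₃ ≠ e₄ := fun h =>
        hadj [e₁, e₂] e₃ (t ++ (e₁ :: e₂ :: e₃ :: e₄ :: t)) (by rw [h]; simp)
      rcases hmem e₁ (by simp) with rfl | rfl
      · rcases hmem e₂ (by simp) with rfl | rfl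
        · exact absurd rfl h12
        · rcases hmem e₃ (by simp) with rfl | rfl
          · rcases hmem e₄ (by simp) with rfl | rfl
            · exact absurd rfl h34
            · exact h212' [1] (t ++ 1 :: 2 :: 1 :: 2 :: t) (by simp)
          · exact absurd rfl h23
      · rcases hmem e₂ (by simp) with rfl | rfl
        · rcases hmem e₃ (by simp) with rfl | rfl
          · exact absurd rfl h23
          · exact h212' [] (e₄ :: (t ++ 2 :: 1 :: 2 :: e₄ :: t)) (by simp)
        · exact absurd rfl h12
    | [], hu => exact hu rfl

theorem stmt_5 :
    ∀ n : ℕ, ¬ ∃ u : List ℕ, u ≠ [] ∧ (u ++ u) <:+: phiH^[n] [0] := by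
  have main : ∀ n : ℕ, (∀ i ∈ phiH^[n] [0], i < 3) ∧ Sqf (phiH^[n] [0]) ∧
      (∀ l r, l ++ [0, 1, 0] ++ r ≠ phiH^[n] [0]) ∧
      (∀ l r, l ++ [2, 1, 2] ++ r ≠ phiH^[n] [0]) := by
    intro n
    induction n with
    | zero =>
      refine ⟨by simp, ?_, ?_, ?_⟩
      · intro u hu ⟨l, r, h⟩
        have hlen := congrArg List.length h
        have hul : 0 < u.length := List.length_pos_iff.2 hu
        simp at hlen
        omega
      · intro l r h
        have hlen := congrArg List.length h
        simp at hlen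
        omega
      · intro l r h
        have hlen := congrArg List.length h
        simp at hlen
        omega
    | succ n ih =>
      obtain ⟨ihA, ihS, ih010, ih212⟩ := ih
      rw [Function.iterate_succ_apply']
      exact ⟨fun i hi => mem_phiH hi, step _ ihA ihS ih010 ih212,
        fun l r h => no010 _ l r h, fun l r h => no212 _ l r h⟩
  intro n ⟨u, hu, hinf⟩
  exact (main n).2.1 u hu hinf
end
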